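/- Assume the set of saddle points of the Lagrangian l is nonempty, M₁ᵏ − (L/2)·Id ∈ S₊(H), M₁ᵏ ⪰ M₁^{k+1}, M₂ᵏ ∈ S₊(G), M₂ᵏ ⪰ M₂^{k+1} for all k ≥ 0, let (xᵏ, zᵏ, yᵏ)_{k≥0} be the sequence generated by the variable-metric ADMM algorithm, and let (x*, z*, y*) be a saddle point of l. Then for all k ≥ 0: (1/2)‖x^{k+1} − x*‖²_{M₁^{k+1}} + (1/2)‖z^{k+1} − Ax*‖²_{M₂^{k+1} + c·Id} + (1/(2c))‖y^{k+1} − y*‖² ≤ (1/2)‖xᵏ − x*‖²_{M₁ᵏ} + (1/2)‖zᵏ − Ax*‖²_{M₂ᵏ + c·Id} + (1/(2c))‖yᵏ − y*‖² − (c/2)‖zᵏ − Ax^{k+1}‖² − (1/2)‖xᵏ − x^{k+1}‖²_{M₁ᵏ − (L/2)Id} − (1/2)‖zᵏ − z^{k+1}‖²_{M₂ᵏ} − L‖L⁻¹(∇h(x*) − ∇h(xᵏ)) + (1/2)(xᵏ − x^{k+1})‖². -/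

import Mathlib

open scoped InnerProductSpace
open Filter

noncomputable section

section OpDefs

variable {E F : Type*} [NormedAddCommGroup E] [InnerProductSpace ℝ E]
  [NormedAddCommGroup F] [InnerProductSpace ℝ F]

/-- `U ∈ S₊(E)`: continuous linear, self-adjoint and positive semidefinite. -/
def IsSplusOp (U : E →L[ℝ] E) : Prop :=
  (∀ x y : E, ⟪U x, y⟫_ℝ = ⟪x, U y⟫_ℝ) ∧ ∀ x : E, 0 ≤ ⟪x, U x⟫_ℝ

/-- The squared seminorm `‖x‖²_U := ⟪x, U x⟫`. -/
def opSq (U : E →L[ℝ] E) (x : E) : ℝ := ⟪x, U x⟫_ℝ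

/-- Loewner order `U ⪰ V`. -/
def opLE (U V : E →L[ℝ] E) : Prop := ∀ x : E, ⟪x, V x⟫_ℝ ≤ ⟪x, U x⟫_ℝ

/-- `U ∈ P_α(E)`, i.e. `U ∈ S₊(E)` and `U ⪰ α·Id`. -/
def IsPalphaOp (α : ℝ) (U : E →L[ℝ] E) : Prop :=
  IsSplusOp U ∧ ∀ x : E, α * ‖x‖ ^ 2 ≤ ⟪x, U x⟫_ℝ

/-- Properness of an extended-real-valued function. -/
def ERealProper (f : E → EReal) : Prop := (∀ x, f x ≠ ⊥) ∧ ∃ x, f x ≠ ⊤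

/-- Convexity of an extended-real-valued function. -/
def ERealConvex (f : E → EReal) : Prop :=
  ∀ x y : E, ∀ a b : ℝ, 0 ≤ a → 0 ≤ b → a + b = 1 →
    f (a • x + b • y) ≤ (a : EReal) * f x + (b : EReal) * f y

/-- Weak convergence of a sequence in a Hilbert space, tested against inner products. -/
def WeakConv (u : ℕ → E) (p : E) : Prop :=
  ∀ w : E, Tendsto (fun k => ⟪u k, w⟫_ℝ) atTop (nhds ⟪p, w⟫_ℝ)

/-- The Lagrangian `l(x,z,y) = f(x) + g(z) + ⟪y, Ax - z⟫`. -/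
def Lagr (f : E → EReal) (g : F → EReal) (A : E →L[ℝ] F) (p : E) (q v : F) : EReal :=
  f p + g q + ((⟪v, A p - q⟫_ℝ : ℝ) : EReal)

/-- The Lagrangian with an additional smooth summand `h`:
`l(x,z,y) = f(x) + h(x) + g(z) + ⟪y, Ax - z⟫`. -/
def LagrH (f : E → EReal) (h : E → ℝ) (g : F → EReal) (A : E →L[ℝ] F)
    (p : E) (q v : F) : EReal :=
  f p + ((h p : ℝ) : EReal) + g q + ((⟪v, A p - q⟫_ℝ : ℝ) : EReal)

/-- `(xs, zs, ys)` is a saddle point of `l`. -/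
def IsSaddle (l : E → F → F → EReal) (xs : E) (zs ys : F) : Prop :=
  ∀ (p : E) (q v : F), l xs zs v ≤ l xs zs ys ∧ l xs zs ys ≤ l p q ys

/-- `xk1` is a minimizer of `u ↦ f u + (c/2)‖Au - zk + c⁻¹ yk‖² + (1/2)‖u - xk‖²_M`. -/
def IsXUpdate (f : E → EReal) (A : E →L[ℝ] F) (c : ℝ) (M : E →L[ℝ] E)
    (xk : E) (zk yk : F) (xk1 : E) : Prop :=
  ∀ u : E,
    f xk1 + (((c/2) * ‖A xk1 - zk + c⁻¹ • yk‖ ^ 2 + (1/2) * opSq M (xk1 - xk) : ℝ) : EReal) ≤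
    f u + (((c/2) * ‖A u - zk + c⁻¹ • yk‖ ^ 2 + (1/2) * opSq M (u - xk) : ℝ) : EReal)

/-- `xk1` is a minimizer of the `x`-subproblem with linearized smooth part:
`u ↦ f u + ⟪u - xk, ∇h(xk)⟫ + (c/2)‖Au - zk + c⁻¹ yk‖² + (1/2)‖u - xk‖²_M`. -/
def IsXUpdateGrad (f : E → EReal) (h' : E → E) (A : E →L[ℝ] F) (c : ℝ) (M : E →L[ℝ] E)
    (xk : E) (zk yk : F) (xk1 : E) : Prop :=
  ∀ u : E,
    f xk1 + ((⟪xk1 - xk, h' xk⟫_ℝ + (c/2) * ‖A xk1 - zk + c⁻¹ • yk‖ ^ 2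
        + (1/2) * opSq M (xk1 - xk) : ℝ) : EReal) ≤
    f u + ((⟪u - xk, h' xk⟫_ℝ + (c/2) * ‖A u - zk + c⁻¹ • yk‖ ^ 2
        + (1/2) * opSq M (u - xk) : ℝ) : EReal)

/-- `zk1` is a minimizer of `w ↦ g w + (c/2)‖Ax - w + c⁻¹ yk‖² + (1/2)‖w - zk‖²_M`. -/
def IsZUpdate (g : F → EReal) (c : ℝ) (M : F →L[ℝ] F)
    (Ax zk yk zk1 : F) : Prop :=
  ∀ w : F,
    g zk1 + (((c/2) * ‖Ax - zk1 + c⁻¹ • yk‖ ^ 2 + (1/2) * opSq M (zk1 - zk) : ℝ) : EReal) ≤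
    g w + (((c/2) * ‖Ax - w + c⁻¹ • yk‖ ^ 2 + (1/2) * opSq M (w - zk) : ℝ) : EReal)

end OpDefs

/-! The two subproblem minimality conditions and the saddle-point conditions in `x` and `z` are
subgradient inequalities, obtained from convexity by differentiating the smooth part of each
objective along a segment. Adding them pairwise (monotonicity of `∂f` and `∂g`), the multiplier
terms telescope into `‖yᵏ - y*‖² - ‖yᵏ⁺¹ - y*‖²` and `‖zᵏ - Ax*‖² - ‖zᵏ⁺¹ - Ax*‖²` because
`yᵏ⁺¹ = yᵏ + c (Axᵏ⁺¹ - zᵏ⁺¹)`, and the metric terms by the three-point identity. The only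
remaining cross term `⟪x* - xᵏ⁺¹, ∇h xᵏ - ∇h x*⟫` is controlled by the `1/L`-cocoercivity of
`∇h` (Baillon–Haddad), and `Mᵏ ⪰ Mᵏ⁺¹` lets the metrics move to step `k + 1`. -/

open scoped NNReal

section OpSq

variable {E : Type*} [NormedAddCommGroup E] [InnerProductSpace ℝ E]

lemma opSq_add_smul_id (M : E →L[ℝ] E) (c : ℝ) (v : E) :
    opSq (M + c • ContinuousLinearMap.id ℝ E) v = opSq M v + c * ‖v‖ ^ 2 := by
  simp [opSq, inner_add_right, real_inner_smul_right]

lemma opSq_sub_smul_id (M : E →L[ℝ] E) (c : ℝ) (v : E) :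
    opSq (M - c • ContinuousLinearMap.id ℝ E) v = opSq M v - c * ‖v‖ ^ 2 := by
  simp [opSq, inner_sub_right, real_inner_smul_right]

lemma inner_sub_apply_sub_eq_opSq {M : E →L[ℝ] E} (hM : (M : E →ₗ[ℝ] E).IsSymmetric)
    (a b c : E) :
    ⟪c - b, M (b - a)⟫_ℝ = (opSq M (a - c) - opSq M (a - b) - opSq M (b - c)) / 2 := by
  have hsymm : ⟪a - b, M (b - c)⟫_ℝ = ⟪b - c, M (a - b)⟫_ℝ := by
    rw [← real_inner_comm]
    exact hM _ _
  rw [show a - c = (a - b) + (b - c) by abel, show c - b = -(b - c) by abel,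
    show b - a = -(a - b) by abel]
  simp only [opSq, map_add, map_neg, inner_add_left, inner_add_right, inner_neg_neg]
  linarith

lemma HasDerivAt.opSq {M : E →L[ℝ] E} (hM : (M : E →ₗ[ℝ] E).IsSymmetric) {γ : ℝ → E} {v : E}
    {t : ℝ} (hγ : HasDerivAt γ v t) :
    HasDerivAt (fun s => opSq M (γ s)) (2 * ⟪v, M (γ t)⟫_ℝ) t := by
  refine (hγ.inner ℝ (M.hasFDerivAt.comp_hasDerivAt t hγ)).congr_deriv ?_
  have hsymm : ⟪γ t, M v⟫_ℝ = ⟪v, M (γ t)⟫_ℝ := by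
    rw [real_inner_comm]
    exact hM _ _
  simp only [Function.comp_apply] at hsymm ⊢
  linarith

end OpSq

lemma ERealProper.exists_eq_coe_of_forall_add_le {E : Type*} {f : E → EReal}
    (hf : ERealProper f) {φ : E → ℝ} {x : E}
    (hmin : ∀ w, f x + (φ x : EReal) ≤ f w + (φ w : EReal)) :
    ∃ a : ℝ, f x = a := by
  obtain ⟨u, hu⟩ := hf.2
  have hx : f x ≠ ⊤ := by
    intro hx
    have hle := hmin u
    rw [hx, EReal.top_add_of_ne_bot (EReal.coe_ne_bot _), top_le_iff] at hle
    exact EReal.add_ne_top hu (EReal.coe_ne_top _) hle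
  exact ⟨(f x).toReal, (EReal.coe_toReal hx (hf.1 x)).symm⟩

section FirstOrder

variable {E : Type*} [NormedAddCommGroup E] [InnerProductSpace ℝ E]

lemma hasDerivAt_add_smul_sub (a v : E) :
    HasDerivAt (fun t : ℝ => a + t • (v - a)) (v - a) 0 := by
  simpa using ((hasDerivAt_id (0 : ℝ)).smul_const (v - a)).const_add a

/-- If `x` minimizes `f + φ`, then `-φ'(x)` is a subgradient of `f` at `x`, in directional form. -/
lemma ERealConvex.le_add_of_forall_add_le {f : E → EReal} (hf : ERealConvex f) {φ : E → ℝ}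
    {x u : E} {a b d : ℝ} (hx : f x = a) (hu : f u = b)
    (hmin : ∀ w, f x + (φ x : EReal) ≤ f w + (φ w : EReal))
    (hφ : HasDerivAt (fun t : ℝ => φ (x + t • (u - x))) d 0) :
    a ≤ b + d := by
  have hslope : ∀ t ∈ Set.Ioc (0 : ℝ) 1,
      a - b ≤ t⁻¹ • (φ (x + (0 + t) • (u - x)) - φ (x + (0 : ℝ) • (u - x))) := by
    rintro t ⟨ht0, ht1⟩
    have hconv := hf x u (1 - t) t (by linarith) ht0.le (by ring)
    rw [show (1 - t) • x + t • u = x + t • (u - x) by module, hx, hu] at hconv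
    have hle := (hmin (x + t • (u - x))).trans (add_le_add_left hconv _)
    rw [hx, ← EReal.coe_mul, ← EReal.coe_mul, ← EReal.coe_add, ← EReal.coe_add,
      ← EReal.coe_add, EReal.coe_le_coe_iff] at hle
    rw [zero_add, zero_smul, add_zero, smul_eq_mul, le_inv_mul_iff₀ ht0]
    linarith
  have hd : a - b ≤ d :=
    ge_of_tendsto hφ.tendsto_slope_zero_right (mem_of_superset (Ioc_mem_nhdsGT one_pos) hslope)
  linarith

end FirstOrder

section Smooth

variable {E : Type*} [NormedAddCommGroup E] [InnerProductSpace ℝ E] [CompleteSpace E]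
  {h : E → ℝ} {h' : E → E}

lemma HasGradientAt.hasDerivAt_add_smul {g a v : E} {t : ℝ}
    (hg : HasGradientAt h g (a + t • v)) :
    HasDerivAt (fun s : ℝ => h (a + s • v)) ⟪g, v⟫_ℝ t := by
  have hline : HasDerivAt (fun s : ℝ => a + s • v) v t := by
    simpa using ((hasDerivAt_id t).smul_const v).const_add a
  simpa [Function.comp_def] using hg.hasFDerivAt.comp_hasDerivAt t hline

lemma ConvexOn.add_inner_le_of_hasGradientAt (hconv : ConvexOn ℝ Set.univ h) {g a : E}
    (hg : HasGradientAt h g a) (b : E) :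
    h a + ⟪g, b - a⟫_ℝ ≤ h b := by
  have hline : ConvexOn ℝ Set.univ (fun t : ℝ => h (a + t • (b - a))) := by
    simpa [Function.comp_def, AffineMap.lineMap_apply_module', add_comm]
      using hconv.comp_affineMap (AffineMap.lineMap a b)
  have hderiv : HasDerivAt (fun t : ℝ => h (a + t • (b - a))) ⟪g, b - a⟫_ℝ 0 :=
    HasGradientAt.hasDerivAt_add_smul (by simpa using hg)
  have := hline.le_slope_of_hasDerivAt (Set.mem_univ 0) (Set.mem_univ 1) one_pos hderiv
  simp [slope_def_field] at this
  linarith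

/-- The descent lemma. -/
lemma le_add_inner_add_of_lipschitzWith (hgrad : ∀ p, HasGradientAt h (h' p) p) {K : ℝ≥0}
    (hlip : LipschitzWith K h') (a v : E) :
    h (a + v) ≤ h a + ⟪h' a, v⟫_ℝ + K / 2 * ‖v‖ ^ 2 := by
  set ψ : ℝ → ℝ := fun t => h (a + t • v) - t * ⟪h' a, v⟫_ℝ - K / 2 * t ^ 2 * ‖v‖ ^ 2
  have hψ : ∀ t, HasDerivAt ψ (⟪h' (a + t • v), v⟫_ℝ - ⟪h' a, v⟫_ℝ - K * t * ‖v‖ ^ 2) t := by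
    intro t
    refine ((((hgrad (a + t • v)).hasDerivAt_add_smul).sub
      ((hasDerivAt_id t).mul_const ⟪h' a, v⟫_ℝ)).sub
      (((hasDerivAt_pow 2 t).const_mul (K / 2 : ℝ)).mul_const (‖v‖ ^ 2))).congr_deriv ?_
    simp only [one_mul, Nat.cast_ofNat]
    ring
  have hψ_nonpos : ∀ t ∈ interior (Set.Icc (0 : ℝ) 1),
      ⟪h' (a + t • v), v⟫_ℝ - ⟪h' a, v⟫_ℝ - K * t * ‖v‖ ^ 2 ≤ 0 := by
    intro t ht
    rw [interior_Icc] at ht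
    have hlip_t : ‖h' (a + t • v) - h' a‖ ≤ K * (t * ‖v‖) := by
      simpa [norm_smul, abs_of_pos ht.1] using hlip.norm_sub_le (a + t • v) a
    have := calc ⟪h' (a + t • v), v⟫_ℝ - ⟪h' a, v⟫_ℝ = ⟪h' (a + t • v) - h' a, v⟫_ℝ :=
          (inner_sub_left _ _ _).symm
      _ ≤ ‖h' (a + t • v) - h' a‖ * ‖v‖ := real_inner_le_norm _ _
      _ ≤ K * (t * ‖v‖) * ‖v‖ := by gcongr
    linarith
  have hanti := antitoneOn_of_hasDerivWithinAt_nonpos (convex_Icc 0 1)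
    (fun t _ => (hψ t).continuousAt.continuousWithinAt) (fun t _ => (hψ t).hasDerivWithinAt)
    hψ_nonpos
  have := hanti (Set.left_mem_Icc.2 zero_le_one) (Set.right_mem_Icc.2 zero_le_one) zero_le_one
  simp only [ψ, zero_smul, add_zero, one_smul, zero_mul, one_mul, sub_zero, ne_eq,
    OfNat.ofNat_ne_zero, not_false_eq_true, zero_pow, mul_zero, one_pow, mul_one] at this
  linarith

/-- The gradient inequality at `b`, evaluated at the point `a - K⁻¹ (∇h a - ∇h b)` of the
descent lemma around `a`. -/
lemma add_inner_add_inv_mul_norm_sq_le (hconv : ConvexOn ℝ Set.univ h)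
    (hgrad : ∀ p, HasGradientAt h (h' p) p) {K : ℝ≥0} (hlip : LipschitzWith K h') (a b : E) :
    h b + ⟪h' b, a - b⟫_ℝ + (K : ℝ)⁻¹ / 2 * ‖h' a - h' b‖ ^ 2 ≤ h a := by
  set g := h' a - h' b
  have hgrad_ineq := hconv.add_inner_le_of_hasGradientAt (hgrad b) (a - (K : ℝ)⁻¹ • g)
  have hdescent := le_add_inner_add_of_lipschitzWith hgrad hlip a (-((K : ℝ)⁻¹ • g))
  have hK : (K : ℝ) / 2 * ((K : ℝ)⁻¹ ^ 2) = (K : ℝ)⁻¹ / 2 := by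
    rcases eq_or_ne (K : ℝ) 0 with hK | hK
    · simp [hK]
    · field_simp
  have hg : (K : ℝ)⁻¹ * ⟪h' a, g⟫_ℝ - (K : ℝ)⁻¹ * ⟪h' b, g⟫_ℝ = (K : ℝ)⁻¹ * ‖g‖ ^ 2 := by
    rw [← mul_sub, ← inner_sub_left, real_inner_self_eq_norm_sq]
  rw [← sub_eq_add_neg, norm_neg, norm_smul, mul_pow, Real.norm_eq_abs, sq_abs,
    inner_neg_right, real_inner_smul_right, ← mul_assoc, hK] at hdescent
  rw [show a - (K : ℝ)⁻¹ • g - b = (a - b) - (K : ℝ)⁻¹ • g by abel, inner_sub_right,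
    real_inner_smul_right] at hgrad_ineq
  linarith

/-- Baillon–Haddad. -/
lemma inv_mul_norm_sub_sq_le_inner (hconv : ConvexOn ℝ Set.univ h)
    (hgrad : ∀ p, HasGradientAt h (h' p) p) {K : ℝ≥0} (hlip : LipschitzWith K h') (a b : E) :
    (K : ℝ)⁻¹ * ‖h' a - h' b‖ ^ 2 ≤ ⟪a - b, h' a - h' b⟫_ℝ := by
  have hab := add_inner_add_inv_mul_norm_sq_le hconv hgrad hlip a b
  have hba := add_inner_add_inv_mul_norm_sq_le hconv hgrad hlip b a
  rw [norm_sub_rev] at hba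
  have : ⟪a - b, h' a - h' b⟫_ℝ = -(⟪h' b, a - b⟫_ℝ + ⟪h' a, b - a⟫_ℝ) := by
    rw [← neg_sub a b, inner_neg_right, inner_sub_right, real_inner_comm, real_inner_comm (h' b)]
    ring
  linarith

end Smooth

section Algebra

variable {E : Type*} [NormedAddCommGroup E] [InnerProductSpace ℝ E]

lemma inner_sub_le_of_cocoercive {L : ℝ} (hL : L ≠ 0) {a b w ga gb : E}
    (hco : L⁻¹ * ‖ga - gb‖ ^ 2 ≤ ⟪a - b, ga - gb⟫_ℝ) :
    ⟪a - w, gb - ga⟫_ℝ ≤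
      L / 4 * ‖b - w‖ ^ 2 - L * ‖L⁻¹ • (ga - gb) + (1 / 2 : ℝ) • (b - w)‖ ^ 2 := by
  have hsplit : ⟪a - w, gb - ga⟫_ℝ = -⟪a - b, ga - gb⟫_ℝ - ⟪b - w, ga - gb⟫_ℝ := by
    rw [show a - w = (a - b) + (b - w) by abel, inner_add_left, ← neg_sub ga gb,
      inner_neg_right, inner_neg_right]
    ring
  have hsq : L * ‖L⁻¹ • (ga - gb) + (1 / 2 : ℝ) • (b - w)‖ ^ 2
      = L⁻¹ * ‖ga - gb‖ ^ 2 + ⟪b - w, ga - gb⟫_ℝ + L / 4 * ‖b - w‖ ^ 2 := by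
    rw [norm_add_sq_real, norm_smul, norm_smul, real_inner_smul_left, real_inner_smul_right,
      real_inner_comm, Real.norm_eq_abs, Real.norm_eq_abs, mul_pow, mul_pow, sq_abs, sq_abs]
    field_simp
    ring
  linarith

/-- `y + c • (a - z)` and `y + c • (a - z')` are the multipliers after the `x`- and after the
`z`-update; this identity turns their cross terms into the `y`- and `z`-parts of the estimate. -/
lemma inner_add_inner_eq_of_multiplier {c : ℝ} (hc : c ≠ 0) (a z z' s y y' : E) :
    ⟪y + c • (a - z) - y', s - a⟫_ℝ + ⟪y + c • (a - z') - y', z' - s⟫_ℝ =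
      1 / (2 * c) * (‖y - y'‖ ^ 2 - ‖y + c • (a - z') - y'‖ ^ 2)
        + c / 2 * (‖z - s‖ ^ 2 - ‖z' - s‖ ^ 2 - ‖z - a‖ ^ 2) := by
  field_simp
  simp only [← real_inner_self_eq_norm_sq, inner_add_left, inner_add_right, inner_sub_left,
    inner_sub_right, real_inner_smul_left, real_inner_smul_right, real_inner_comm y y',
    real_inner_comm a y, real_inner_comm a y', real_inner_comm z a, real_inner_comm s z,
    real_inner_comm z' a, real_inner_comm s z', real_inner_comm z' y, real_inner_comm z' y',
    real_inner_comm s y, real_inner_comm s y', real_inner_comm s a]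
  ring

end Algebra

section Updates

variable {E F : Type*} [NormedAddCommGroup E] [InnerProductSpace ℝ E]
  [NormedAddCommGroup F] [InnerProductSpace ℝ F]

lemma IsXUpdateGrad.exists_eq_coe {f : E → EReal} (hf : ERealProper f) {h' : E → E}
    {A : E →L[ℝ] F} {c : ℝ} {M : E →L[ℝ] E} {xk xk1 : E} {zk yk : F}
    (hupd : IsXUpdateGrad f h' A c M xk zk yk xk1) : ∃ a : ℝ, f xk1 = a :=
  hf.exists_eq_coe_of_forall_add_le (φ := fun w => ⟪w - xk, h' xk⟫_ℝ
    + c / 2 * ‖A w - zk + c⁻¹ • yk‖ ^ 2 + 1 / 2 * opSq M (w - xk)) hupd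

lemma IsZUpdate.exists_eq_coe {g : F → EReal} (hg : ERealProper g) {c : ℝ} {M : F →L[ℝ] F}
    {Ax zk yk zk1 : F} (hupd : IsZUpdate g c M Ax zk yk zk1) : ∃ a : ℝ, g zk1 = a :=
  hg.exists_eq_coe_of_forall_add_le (φ := fun v => c / 2 * ‖Ax - v + c⁻¹ • yk‖ ^ 2
    + 1 / 2 * opSq M (v - zk)) hupd

lemma IsXUpdateGrad.le_add_inner {f : E → EReal} (hf : ERealConvex f) {h' : E → E}
    {A : E →L[ℝ] F} {c : ℝ} (hc : c ≠ 0) {M : E →L[ℝ] E} (hM : (M : E →ₗ[ℝ] E).IsSymmetric)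
    {xk xk1 u : E} {zk yk : F} (hupd : IsXUpdateGrad f h' A c M xk zk yk xk1) {a b : ℝ}
    (hxk1 : f xk1 = a) (hu : f u = b) :
    a ≤ b + ⟪u - xk1, h' xk⟫_ℝ + ⟪yk + c • (A xk1 - zk), A u - A xk1⟫_ℝ
      + ⟪u - xk1, M (xk1 - xk)⟫_ℝ := by
  have hline := hasDerivAt_add_smul_sub xk1 u
  have hφ := (((hline.sub_const xk).inner ℝ (hasDerivAt_const 0 (h' xk))).add
    ((((A.hasFDerivAt.comp_hasDerivAt 0 hline).sub_const zk).add_const (c⁻¹ • yk)).norm_sq.const_mul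
      (c / 2))).add (((hline.sub_const xk).opSq hM).const_mul (1 / 2))
  refine (hf.le_add_of_forall_add_le (φ := fun w => ⟪w - xk, h' xk⟫_ℝ
    + c / 2 * ‖A w - zk + c⁻¹ • yk‖ ^ 2 + 1 / 2 * opSq M (w - xk)) hxk1 hu hupd hφ).trans_eq ?_
  have hy : yk + c • (A xk1 - zk) = c • (A xk1 - zk + c⁻¹ • yk) := by
    rw [smul_add, smul_inv_smul₀ hc, add_comm]
  simp only [zero_smul, add_zero, inner_zero_right, zero_add, Function.comp_apply, hy,
    real_inner_smul_left, real_inner_comm (h' xk), map_sub]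
  ring

lemma IsZUpdate.le_add_inner {g : F → EReal} (hg : ERealConvex g) {c : ℝ} (hc : c ≠ 0)
    {M : F →L[ℝ] F} (hM : (M : F →ₗ[ℝ] F).IsSymmetric) {Ax zk yk zk1 w : F}
    (hupd : IsZUpdate g c M Ax zk yk zk1) {a b : ℝ} (hzk1 : g zk1 = a) (hw : g w = b) :
    a ≤ b + ⟪yk + c • (Ax - zk1), zk1 - w⟫_ℝ + ⟪w - zk1, M (zk1 - zk)⟫_ℝ := by
  have hline := hasDerivAt_add_smul_sub zk1 w
  have hφ := ((((hline.const_sub Ax).add_const (c⁻¹ • yk)).norm_sq.const_mul (c / 2))).add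
    (((hline.sub_const zk).opSq hM).const_mul (1 / 2))
  refine (hg.le_add_of_forall_add_le (φ := fun v => c / 2 * ‖Ax - v + c⁻¹ • yk‖ ^ 2
    + 1 / 2 * opSq M (v - zk)) hzk1 hw hupd hφ).trans_eq ?_
  have hy : yk + c • (Ax - zk1) = c • (Ax - zk1 + c⁻¹ • yk) := by
    rw [smul_add, smul_inv_smul₀ hc, add_comm]
  simp only [zero_smul, add_zero, hy, real_inner_smul_left, ← neg_sub w zk1, inner_neg_right]
  ring

end Updates

section Saddle

variable {E F : Type*} [NormedAddCommGroup E] [InnerProductSpace ℝ E]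
  [NormedAddCommGroup F] [InnerProductSpace ℝ F]
  {f : E → EReal} {h : E → ℝ} {g : F → EReal} {A : E →L[ℝ] F} {xs : E} {zs ys : F}

lemma lagrH_eq {p : E} {q : F} (v : F) {b : ℝ} (hq : g q = b) :
    LagrH f h g A p q v = f p + ((h p + b + ⟪v, A p - q⟫_ℝ : ℝ) : EReal) := by
  simp only [LagrH, hq, EReal.coe_add, add_assoc]

lemma lagrH_eq_coe {p : E} {q : F} (v : F) {a b : ℝ} (hp : f p = a) (hq : g q = b) :
    LagrH f h g A p q v = ((a + h p + b + ⟪v, A p - q⟫_ℝ : ℝ) : EReal) := by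
  simp only [lagrH_eq v hq, hp, EReal.coe_add, add_assoc]

lemma IsSaddle.exists_eq_coe (hfp : ERealProper f) (hgp : ERealProper g)
    (hsp : IsSaddle (LagrH f h g A) xs zs ys) :
    (∃ a : ℝ, f xs = a) ∧ ∃ b : ℝ, g zs = b := by
  obtain ⟨p, hp⟩ := hfp.2
  obtain ⟨q, hq⟩ := hgp.2
  have hfin : LagrH f h g A xs zs ys ≠ ⊤ := ne_top_of_le_ne_top
    (EReal.add_ne_top (EReal.add_ne_top (EReal.add_ne_top hp (EReal.coe_ne_top _)) hq)
      (EReal.coe_ne_top _)) (hsp p q ys).2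
  have hf : f xs ≠ ⊤ := fun htop => hfin <| by
    rw [LagrH, htop, EReal.top_add_of_ne_bot (EReal.coe_ne_bot _),
      EReal.top_add_of_ne_bot (hgp.1 zs), EReal.top_add_of_ne_bot (EReal.coe_ne_bot _)]
  have hg : g zs ≠ ⊤ := fun htop => hfin <| by
    rw [LagrH, ← EReal.coe_toReal hf (hfp.1 xs), ← EReal.coe_add, htop,
      EReal.add_top_of_ne_bot (EReal.coe_ne_bot _), EReal.top_add_of_ne_bot (EReal.coe_ne_bot _)]
  exact ⟨⟨_, (EReal.coe_toReal hf (hfp.1 xs)).symm⟩, ⟨_, (EReal.coe_toReal hg (hgp.1 zs)).symm⟩⟩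

/-- Maximality in the multiplier forces primal feasibility. -/
lemma IsSaddle.map_eq (hsp : IsSaddle (LagrH f h g A) xs zs ys) {a b : ℝ} (hxs : f xs = a)
    (hzs : g zs = b) : A xs = zs := by
  have hmax := (hsp xs zs (ys + (A xs - zs))).1
  rw [lagrH_eq_coe _ hxs hzs, lagrH_eq_coe _ hxs hzs, EReal.coe_le_coe_iff, inner_add_left,
    real_inner_self_eq_norm_sq] at hmax
  rw [← sub_eq_zero, ← norm_eq_zero]
  exact (pow_eq_zero_iff two_ne_zero).1 (le_antisymm (by linarith) (sq_nonneg _))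

lemma IsSaddle.le_sub_inner (hsp : IsSaddle (LagrH f h g A) xs zs ys) {a b : ℝ} (hxs : f xs = a)
    (hzs : g zs = b) {q : F} {b' : ℝ} (hq : g q = b') :
    b ≤ b' - ⟪ys, q - zs⟫_ℝ := by
  have hmin := (hsp xs q ys).2
  rw [lagrH_eq_coe _ hxs hzs, lagrH_eq_coe _ hxs hq, EReal.coe_le_coe_iff,
    hsp.map_eq hxs hzs, sub_self, inner_zero_right, ← neg_sub q, inner_neg_right] at hmin
  linarith

lemma IsSaddle.le_sub_inner_gradient [CompleteSpace E] (hfc : ERealConvex f) {gs : E}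
    (hgrad : HasGradientAt h gs xs) (hsp : IsSaddle (LagrH f h g A) xs zs ys) {a b : ℝ}
    (hxs : f xs = a) (hzs : g zs = b) {p : E} {a' : ℝ} (hp : f p = a') :
    a ≤ a' - ⟪xs - p, gs⟫_ℝ - ⟪ys, A xs - A p⟫_ℝ := by
  have hline := hasDerivAt_add_smul_sub xs p
  have hh : HasDerivAt (fun t : ℝ => h (xs + t • (p - xs))) ⟪gs, p - xs⟫_ℝ 0 :=
    HasGradientAt.hasDerivAt_add_smul (by simpa using hgrad)
  have hφ := (hh.add_const b).add
    ((hasDerivAt_const 0 ys).inner ℝ ((A.hasFDerivAt.comp_hasDerivAt 0 hline).sub_const zs))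
  refine (hfc.le_add_of_forall_add_le (φ := fun w => h w + b + ⟪ys, A w - zs⟫_ℝ) hxs hp
    (fun w => by simpa only [lagrH_eq ys hzs] using (hsp w zs ys).2) hφ).trans_eq ?_
  rw [inner_zero_left, add_zero, ← neg_sub xs p, map_neg, inner_neg_right, inner_neg_right,
    real_inner_comm, map_sub]
  ring

end Saddle

section Steps

variable {E F : Type*} [NormedAddCommGroup E] [InnerProductSpace ℝ E]
  [NormedAddCommGroup F] [InnerProductSpace ℝ F]
  {f : E → EReal} {h : E → ℝ} {g : F → EReal} {A : E →L[ℝ] F} {c : ℝ} {xs : E} {zs ys : F}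
  {a b : ℝ}

lemma IsXUpdateGrad.nonneg_inner_add_of_isSaddle [CompleteSpace E] {h' : E → E}
    {M : E →L[ℝ] E} {xk xk1 : E} {zk yk : F} (hupd : IsXUpdateGrad f h' A c M xk zk yk xk1)
    (hfp : ERealProper f) (hfc : ERealConvex f) (hc : c ≠ 0) (hM : (M : E →ₗ[ℝ] E).IsSymmetric)
    (hgrad : HasGradientAt h (h' xs) xs) (hsp : IsSaddle (LagrH f h g A) xs zs ys)
    (hxs : f xs = a) (hzs : g zs = b) :
    0 ≤ ⟪xs - xk1, h' xk - h' xs⟫_ℝ + ⟪yk + c • (A xk1 - zk) - ys, A xs - A xk1⟫_ℝ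
      + ⟪xs - xk1, M (xk1 - xk)⟫_ℝ := by
  obtain ⟨a', hxk1⟩ := hupd.exists_eq_coe hfp
  have hupd_opt := hupd.le_add_inner hfc hc hM hxk1 hxs
  have hsp_opt := hsp.le_sub_inner_gradient hfc hgrad hxs hzs hxk1
  rw [inner_sub_right (xs - xk1), inner_sub_left _ ys]
  linarith

lemma IsZUpdate.nonneg_inner_add_of_isSaddle {M : F →L[ℝ] F} {Ax zk yk zk1 : F}
    (hupd : IsZUpdate g c M Ax zk yk zk1) (hgp : ERealProper g) (hgc : ERealConvex g)
    (hc : c ≠ 0) (hM : (M : F →ₗ[ℝ] F).IsSymmetric) (hsp : IsSaddle (LagrH f h g A) xs zs ys)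
    (hxs : f xs = a) (hzs : g zs = b) :
    0 ≤ ⟪yk + c • (Ax - zk1) - ys, zk1 - zs⟫_ℝ + ⟪zs - zk1, M (zk1 - zk)⟫_ℝ := by
  obtain ⟨b', hzk1⟩ := hupd.exists_eq_coe hgp
  have hupd_opt := hupd.le_add_inner hgc hc hM hzk1 hzs
  have hsp_opt := hsp.le_sub_inner hxs hzs hzk1
  rw [inner_sub_left _ ys]
  linarith

end Steps

theorem stmt12_general {H G : Type*}
    [NormedAddCommGroup H] [InnerProductSpace ℝ H] [CompleteSpace H]
    [NormedAddCommGroup G] [InnerProductSpace ℝ G]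
    (f : H → EReal) (g : G → EReal)
    (hfp : ERealProper f) (hfc : ERealConvex f)
    (hgp : ERealProper g) (hgc : ERealConvex g)
    (h : H → ℝ) (h' : H → H) (L : ℝ) (hL : 0 < L)
    (hconv : ConvexOn ℝ Set.univ h)
    (hgrad : ∀ p : H, HasGradientAt h (h' p) p)
    (hlip : LipschitzWith (Real.toNNReal L) h')
    (A : H →L[ℝ] G) (c : ℝ) (hc : 0 < c)
    (M₁ : ℕ → (H →L[ℝ] H)) (M₂ : ℕ → (G →L[ℝ] G))
    (hM₁ : ∀ k : ℕ, IsSplusOp (M₁ k)) (hM₂ : ∀ k : ℕ, IsSplusOp (M₂ k))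
    (hM₁mono : ∀ k : ℕ, opLE (M₁ k) (M₁ (k+1)))
    (hM₂mono : ∀ k : ℕ, opLE (M₂ k) (M₂ (k+1)))
    (x : ℕ → H) (z y : ℕ → G)
    (hx : ∀ k : ℕ, IsXUpdateGrad f h' A c (M₁ k) (x k) (z k) (y k) (x (k+1)))
    (hz : ∀ k : ℕ, IsZUpdate g c (M₂ k) (A (x (k+1))) (z k) (y k) (z (k+1)))
    (hy : ∀ k : ℕ, y (k+1) = y k + c • (A (x (k+1)) - z (k+1)))
    (xs : H) (zs ys : G)
    (hsp : IsSaddle (LagrH f h g A) xs zs ys) :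
    ∀ k : ℕ,
      (1/2) * opSq (M₁ (k+1)) (x (k+1) - xs)
        + (1/2) * opSq (M₂ (k+1) + c • ContinuousLinearMap.id ℝ G) (z (k+1) - A xs)
        + (1/(2*c)) * ‖y (k+1) - ys‖ ^ 2 ≤
      (1/2) * opSq (M₁ k) (x k - xs)
        + (1/2) * opSq (M₂ k + c • ContinuousLinearMap.id ℝ G) (z k - A xs)
        + (1/(2*c)) * ‖y k - ys‖ ^ 2
        - (c/2) * ‖z k - A (x (k+1))‖ ^ 2
        - (1/2) * opSq (M₁ k - (L/2) • ContinuousLinearMap.id ℝ H) (x k - x (k+1))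
        - (1/2) * opSq (M₂ k) (z k - z (k+1))
        - L * ‖L⁻¹ • (h' xs - h' (x k)) + (1/2 : ℝ) • (x k - x (k+1))‖ ^ 2 := by
  obtain ⟨⟨fxs, hfxs⟩, ⟨gzs, hgzs⟩⟩ := hsp.exists_eq_coe hfp hgp
  obtain rfl : A xs = zs := hsp.map_eq hfxs hgzs
  intro k
  have hx_step := (hx k).nonneg_inner_add_of_isSaddle hfp hfc hc.ne' (hM₁ k).1 (hgrad xs) hsp
    hfxs hgzs
  have hz_step := (hz k).nonneg_inner_add_of_isSaddle hgp hgc hc.ne' (hM₂ k).1 hsp hfxs hgzs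
  have hmult := inner_add_inner_eq_of_multiplier hc.ne' (A (x (k+1))) (z k) (z (k+1)) (A xs)
    (y k) ys
  have hM₁_three := inner_sub_apply_sub_eq_opSq (hM₁ k).1 (x k) (x (k+1)) xs
  have hM₂_three := inner_sub_apply_sub_eq_opSq (hM₂ k).1 (z k) (z (k+1)) (A xs)
  have hco := inner_sub_le_of_cocoercive hL.ne' (w := x (k+1)) <| by
    simpa [Real.coe_toNNReal L hL.le] using inv_mul_norm_sub_sq_le_inner hconv hgrad hlip xs (x k)
  have hM₁_mono : opSq (M₁ (k+1)) (x (k+1) - xs) ≤ opSq (M₁ k) (x (k+1) - xs) := hM₁mono k _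
  have hM₂_mono : opSq (M₂ (k+1)) (z (k+1) - A xs) ≤ opSq (M₂ k) (z (k+1) - A xs) :=
    hM₂mono k _
  rw [hy k, opSq_add_smul_id, opSq_add_smul_id, opSq_sub_smul_id]
  linarith

theorem stmt12 {H G : Type*}
    [NormedAddCommGroup H] [InnerProductSpace ℝ H] [CompleteSpace H]
    [NormedAddCommGroup G] [InnerProductSpace ℝ G] [CompleteSpace G]
    (f : H → EReal) (g : G → EReal)
    (hfp : ERealProper f) (hfc : ERealConvex f) (hfl : LowerSemicontinuous f)
    (hgp : ERealProper g) (hgc : ERealConvex g) (hgl : LowerSemicontinuous g)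
    (h : H → ℝ) (h' : H → H) (L : ℝ) (hL : 0 < L)
    (hconv : ConvexOn ℝ Set.univ h)
    (hgrad : ∀ p : H, HasGradientAt h (h' p) p)
    (hlip : LipschitzWith (Real.toNNReal L) h')
    (A : H →L[ℝ] G) (c : ℝ) (hc : 0 < c)
    (M₁ : ℕ → (H →L[ℝ] H)) (M₂ : ℕ → (G →L[ℝ] G))
    (hM₁ : ∀ k : ℕ, IsSplusOp (M₁ k)) (hM₂ : ∀ k : ℕ, IsSplusOp (M₂ k))
    (hM₁L : ∀ k : ℕ, IsSplusOp (M₁ k - (L/2) • ContinuousLinearMap.id ℝ H))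
    (hM₁mono : ∀ k : ℕ, opLE (M₁ k) (M₁ (k+1)))
    (hM₂mono : ∀ k : ℕ, opLE (M₂ k) (M₂ (k+1)))
    (x : ℕ → H) (z y : ℕ → G)
    (hx : ∀ k : ℕ, IsXUpdateGrad f h' A c (M₁ k) (x k) (z k) (y k) (x (k+1)))
    (hz : ∀ k : ℕ, IsZUpdate g c (M₂ k) (A (x (k+1))) (z k) (y k) (z (k+1)))
    (hy : ∀ k : ℕ, y (k+1) = y k + c • (A (x (k+1)) - z (k+1)))
    (xs : H) (zs ys : G)
    (hsp : IsSaddle (LagrH f h g A) xs zs ys) :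
    ∀ k : ℕ,
      (1/2) * opSq (M₁ (k+1)) (x (k+1) - xs)
        + (1/2) * opSq (M₂ (k+1) + c • ContinuousLinearMap.id ℝ G) (z (k+1) - A xs)
        + (1/(2*c)) * ‖y (k+1) - ys‖ ^ 2 ≤
      (1/2) * opSq (M₁ k) (x k - xs)
        + (1/2) * opSq (M₂ k + c • ContinuousLinearMap.id ℝ G) (z k - A xs)
        + (1/(2*c)) * ‖y k - ys‖ ^ 2
        - (c/2) * ‖z k - A (x (k+1))‖ ^ 2
        - (1/2) * opSq (M₁ k - (L/2) • ContinuousLinearMap.id ℝ H) (x k - x (k+1))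
        - (1/2) * opSq (M₂ k) (z k - z (k+1))
        - L * ‖L⁻¹ • (h' xs - h' (x k)) + (1/2 : ℝ) • (x k - x (k+1))‖ ^ 2 :=
  stmt12_general f g hfp hfc hgp hgc h h' L hL hconv hgrad hlip A c hc M₁ M₂ hM₁ hM₂ hM₁mono hM₂mono
    x z y hx hz hy xs zs ys hsp
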